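/- Let Ω be a locally compact Hausdorff space and Γ a nondegenerate Banach module over C₀(Ω). Then for every s ∈ Γ the supporting ideal I_s coincides with the set of functions vanishing on the support of s, i.e. I_s = {f ∈ C₀(Ω) : f(x) = 0 for every x ∈ supp(s)}. -/

import Mathlib

open scoped ZeroAtInfty

noncomputable section

variable {𝕜 : Type*} [RCLike 𝕜] {Ω : Type*} [TopologicalSpace Ω]
  {Γ : Type*} [NormedAddCommGroup Γ] [NormedSpace 𝕜 Γ]

/-- A Banach module structure over `C₀(Ω, 𝕜)` on a `𝕜`-Banach space `Γ`. -/
structure C0Module (𝕜 : Type*) [RCLike 𝕜] (Ω : Type*) [TopologicalSpace Ω]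
    (Γ : Type*) [NormedAddCommGroup Γ] [NormedSpace 𝕜 Γ] where
  smul : C₀(Ω, 𝕜) →L[𝕜] Γ →L[𝕜] Γ
  mul_smul : ∀ (f g : C₀(Ω, 𝕜)) (s : Γ), smul (f * g) s = smul f (smul g s)
  norm_smul_le : ∀ (f : C₀(Ω, 𝕜)) (s : Γ), ‖smul f s‖ ≤ ‖f‖ * ‖s‖

/-- Nondegeneracy of a Banach module over `C₀(Ω, 𝕜)`. -/
def C0Module.Nondegenerate (M : C0Module 𝕜 Ω Γ) : Prop :=
  Dense (Submodule.span 𝕜 {x : Γ | ∃ (f : C₀(Ω, 𝕜)) (s : Γ), M.smul f s = x} : Set Γ)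

/-- The support of `s` in `Ω`: the set of points `x` such that every `f ∈ C₀(Ω)` with
`f x ≠ 0` satisfies `f • s ≠ 0`. -/
def C0Module.support (M : C0Module 𝕜 Ω Γ) (s : Γ) : Set Ω :=
  {x : Ω | ∀ f : C₀(Ω, 𝕜), f x ≠ 0 → M.smul f s ≠ 0}

/-- The supporting ideal of `s`: all `f ∈ C₀(Ω)` with `f • s = 0`. -/
def C0Module.suppIdeal (M : C0Module 𝕜 Ω Γ) (s : Γ) : Set C₀(Ω, 𝕜) :=
  {f : C₀(Ω, 𝕜) | M.smul f s = 0}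

private lemma c0_norm_le {f : C₀(Ω, 𝕜)} {C : ℝ} (hC : 0 ≤ C) (h : ∀ x, ‖f x‖ ≤ C) :
    ‖f‖ ≤ C := by
  rw [← ZeroAtInftyContinuousMap.norm_toBCF_eq_norm]
  exact (BoundedContinuousFunction.norm_le hC).2 h

private lemma c0_norm_apply_le (f : C₀(Ω, 𝕜)) (x : Ω) : ‖f x‖ ≤ ‖f‖ := by
  rw [← ZeroAtInftyContinuousMap.norm_toBCF_eq_norm]
  exact BoundedContinuousFunction.norm_coe_le_norm f.toBCF x

private lemma c0_sum_apply {ι : Type*} (t : Finset ι) (F : ι → C₀(Ω, 𝕜)) (x : Ω) :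
    (∑ i ∈ t, F i) x = ∑ i ∈ t, F i x :=
  map_sum (AddMonoidHom.mk' (fun (g : C₀(Ω, 𝕜)) => g x) (fun a b => by
    simp [ZeroAtInftyContinuousMap.coe_add])) F t

private lemma exists_c0_div (f : C₀(Ω, 𝕜)) (G : Ω → ℝ) (hGcont : Continuous G)
    (hGnonneg : ∀ x, 0 ≤ G x) (n : ℝ) (hn : 0 < n) :
    ∃ h : C₀(Ω, 𝕜), ∀ x, h x = ((n / (1 + n * G x) : ℝ) : 𝕜) * f x := by
  have hdpos : ∀ x, 0 < 1 + n * G x := fun x => by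
    have := hGnonneg x; nlinarith
  refine ⟨⟨⟨fun x => ((n / (1 + n * G x) : ℝ) : 𝕜) * f x, ?_⟩, ?_⟩, fun x => rfl⟩
  · refine Continuous.mul ?_ (map_continuous f)
    exact RCLike.continuous_ofReal.comp (continuous_const.div
      (continuous_const.add (continuous_const.mul hGcont))
      (fun x => (hdpos x).ne'))
  · refine squeeze_zero_norm (f := fun x => ((n / (1 + n * G x) : ℝ) : 𝕜) * f x)
      (a := fun x => n * ‖f x‖) (fun x => ?_) ?_
    · rw [norm_mul, RCLike.norm_ofReal]
      have h1 : 0 ≤ n / (1 + n * G x) := le_of_lt (div_pos hn (hdpos x))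
      have h2 : n / (1 + n * G x) ≤ n := by
        rw [div_le_iff₀ (hdpos x)]
        have := hGnonneg x
        nlinarith [mul_nonneg (mul_nonneg hn.le hn.le) this]
      rw [abs_of_nonneg h1]
      have := norm_nonneg (f x)
      nlinarith
    · have : Filter.Tendsto (fun x => ‖f x‖) (Filter.cocompact Ω) (nhds 0) := by
        simpa using (zero_at_infty f : Filter.Tendsto _ _ _).norm
      simpa using this.const_mul n

set_option maxHeartbeats 1000000 in
/-- For a nondegenerate Banach module `Γ` over `C₀(Ω)` of a locally compact
Hausdorff space `Ω`, the supporting ideal of `s ∈ Γ` consists exactly of the functions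
vanishing on the support of `s`. -/
theorem suppIdeal_eq_vanishing_on_support
    [LocallyCompactSpace Ω] [T2Space Ω] [CompleteSpace Γ]
    (M : C0Module 𝕜 Ω Γ) (hM : M.Nondegenerate) (s : Γ) :
    M.suppIdeal s = {f : C₀(Ω, 𝕜) | ∀ x ∈ M.support s, f x = 0} := by
  ext f
  simp only [C0Module.suppIdeal, Set.mem_setOf_eq]
  constructor
  · intro hf x hx
    by_contra hfx
    exact hx f hfx hf
  · intro hf
    -- The supporting ideal is closed.
    have hclosed : IsClosed (M.suppIdeal s) := by
      have : M.suppIdeal s = (M.smul.flip s) ⁻¹' {0} := by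
        ext g
        simp [C0Module.suppIdeal, ContinuousLinearMap.flip_apply]
      rw [this]
      exact isClosed_singleton.preimage (M.smul.flip s).continuous
    -- it suffices to show `f` is in the closure
    suffices hcl : f ∈ closure (M.suppIdeal s) by
      rw [hclosed.closure_eq] at hcl
      exact hcl
    by_cases hf0 : f = 0
    · subst hf0
      exact subset_closure (by simp [C0Module.suppIdeal])
    rw [Metric.mem_closure_iff]
    intro ε hε
    set ε' : ℝ := ε / 2 with hε'def
    have hε' : 0 < ε' := by positivity
    have hε'lt : ε' < ε := by simp [hε'def]; linarith
    -- the set where `‖f‖ ≥ ε'` is compact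
    set K : Set Ω := {x | ε' ≤ ‖f x‖} with hKdef
    have hKclosed : IsClosed K :=
      isClosed_le continuous_const ((map_continuous f).norm)
    have hK : IsCompact K := by
      have h1 : f ⁻¹' Metric.ball 0 ε' ∈ Filter.cocompact Ω :=
        zero_at_infty f (Metric.ball_mem_nhds 0 hε')
      rw [Filter.mem_cocompact] at h1
      obtain ⟨C, hC, hsub⟩ := h1
      refine hC.of_isClosed_subset hKclosed fun x hx => ?_
      by_contra hxC
      have : x ∈ f ⁻¹' Metric.ball 0 ε' := hsub hxC
      simp only [Set.mem_preimage, Metric.mem_ball, dist_zero_right] at this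
      exact absurd hx (by simp only [hKdef, Set.mem_setOf_eq]; linarith)
    -- cover K by zero sets of elements of the supporting ideal
    set ι := {g : C₀(Ω, 𝕜) // M.smul g s = 0} with hιdef
    have hcover : K ⊆ ⋃ i : ι, {x | (i : C₀(Ω, 𝕜)) x ≠ 0} := by
      intro x hx
      have hfx : f x ≠ 0 := by
        intro h0
        have := hx.out
        rw [h0, norm_zero] at this
        linarith
      have hxsupp : x ∉ M.support s := fun hxs => hfx (hf x hxs)
      simp only [C0Module.support, Set.mem_setOf_eq, not_forall] at hxsupp
      obtain ⟨g, hgx, hgs⟩ := hxsupp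
      rw [not_not] at hgs
      exact Set.mem_iUnion.2 ⟨⟨g, hgs⟩, hgx⟩
    have hopen : ∀ i : ι, IsOpen {x | (i : C₀(Ω, 𝕜)) x ≠ 0} := fun i =>
      isOpen_compl_singleton.preimage (map_continuous (i : C₀(Ω, 𝕜)))
    obtain ⟨t, ht⟩ := hK.elim_finite_subcover _ hopen hcover
    -- the real-valued function G
    set G : Ω → ℝ := fun x => ∑ i ∈ t, ‖(i : C₀(Ω, 𝕜)) x‖ ^ 2 with hGdef
    have hGcont : Continuous G := continuous_finset_sum _ fun i _ =>
      ((map_continuous (i : C₀(Ω, 𝕜))).norm.pow 2)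
    have hGnonneg : ∀ x, 0 ≤ G x := fun x =>
      Finset.sum_nonneg fun i _ => by positivity
    have hGposK : ∀ x ∈ K, 0 < G x := by
      intro x hx
      obtain ⟨i, hit, hix⟩ := Set.mem_iUnion₂.1 (ht hx)
      refine Finset.sum_pos' (fun j _ => by positivity) ⟨i, hit, ?_⟩
      have hne : (i : C₀(Ω, 𝕜)) x ≠ 0 := hix
      exact pow_pos (norm_pos_iff.2 hne) 2
    -- the C₀ element g with g x = G x
    set g : C₀(Ω, 𝕜) := ∑ i ∈ t, star (i : C₀(Ω, 𝕜)) * (i : C₀(Ω, 𝕜)) with hgdef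
    have hg_apply : ∀ x, g x = ((G x : ℝ) : 𝕜) := by
      intro x
      rw [hgdef, c0_sum_apply]
      simp only [ZeroAtInftyContinuousMap.coe_mul, Pi.mul_apply,
        ZeroAtInftyContinuousMap.star_apply, RCLike.star_def, RCLike.conj_mul, hGdef]
      norm_cast
    -- multiplying an element of the ideal stays in the ideal
    have hideal : ∀ (a b : C₀(Ω, 𝕜)), M.smul a s = 0 → M.smul (b * a) s = 0 := by
      intro a b ha
      rw [M.mul_smul, ha]
      exact (M.smul b).map_zero
    have hgs : M.smul g s = 0 := by
      have : M.smul g s = M.smul.flip s g := rfl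
      rw [this, hgdef, map_sum]
      refine Finset.sum_eq_zero fun i _ => ?_
      exact hideal _ _ i.2
    by_cases hKne : K.Nonempty
    · -- minimum of G on K
      obtain ⟨x₀, hx₀K, hmin⟩ := hK.exists_isMinOn hKne hGcont.continuousOn
      set δ : ℝ := G x₀ with hδdef
      have hδpos : 0 < δ := hGposK x₀ hx₀K
      have hδle : ∀ x ∈ K, δ ≤ G x := fun x hx => hmin hx
      have hfnorm : 0 < ‖f‖ := norm_pos_iff.2 hf0
      set n : ℝ := ‖f‖ / (ε' * δ) with hndef
      have hn : 0 < n := by positivity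
      have hdpos : ∀ x, 0 < 1 + n * G x := fun x => by
        have := hGnonneg x; nlinarith
      obtain ⟨h, hhx⟩ := exists_c0_div f G hGcont hGnonneg n hn
      refine ⟨h * g, hideal _ _ hgs, ?_⟩
      rw [dist_eq_norm]
      have hbound : ∀ x, ‖(f - h * g) x‖ ≤ ε' := by
        intro x
        rw [ZeroAtInftyContinuousMap.coe_sub, Pi.sub_apply,
          ZeroAtInftyContinuousMap.coe_mul, Pi.mul_apply, hg_apply]
        rw [hhx x]
        have key : f x - ((n / (1 + n * G x) : ℝ) : 𝕜) * f x * ((G x : ℝ) : 𝕜)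
            = ((1 / (1 + n * G x) : ℝ) : 𝕜) * f x := by
          have : (1 : ℝ) - n / (1 + n * G x) * G x = 1 / (1 + n * G x) := by
            rw [div_mul_eq_mul_div, one_sub_div (hdpos x).ne']; ring
          calc f x - ((n / (1 + n * G x) : ℝ) : 𝕜) * f x * ((G x : ℝ) : 𝕜)
              = (((1 : ℝ) - n / (1 + n * G x) * G x : ℝ) : 𝕜) * f x := by
                push_cast; ring
            _ = ((1 / (1 + n * G x) : ℝ) : 𝕜) * f x := by rw [this]
        rw [key, norm_mul, RCLike.norm_ofReal,
          abs_of_nonneg (le_of_lt (by positivity : (0:ℝ) < 1 / (1 + n * G x)))]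
        by_cases hxK : x ∈ K
        · have h1 : δ ≤ G x := hδle x hxK
          have h2 : ‖f x‖ ≤ ‖f‖ := c0_norm_apply_le f x
          have h3 : n * δ = ‖f‖ / ε' := by
            rw [hndef]; field_simp
          have h4 : ‖f‖ / ε' ≤ 1 + n * G x := by
            have h4a : n * δ ≤ n * G x := mul_le_mul_of_nonneg_left h1 hn.le
            rw [h3] at h4a
            linarith
          have hfe : 0 < ‖f‖ / ε' := div_pos hfnorm hε'
          have h5 : 1 / (1 + n * G x) ≤ ε' / ‖f‖ := by
            calc 1 / (1 + n * G x) ≤ 1 / (‖f‖ / ε') :=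
                  one_div_le_one_div_of_le hfe h4
              _ = ε' / ‖f‖ := one_div_div _ _
          calc 1 / (1 + n * G x) * ‖f x‖ ≤ (ε' / ‖f‖) * ‖f‖ :=
                mul_le_mul h5 h2 (norm_nonneg _) (le_of_lt (div_pos hε' hfnorm))
            _ = ε' := div_mul_cancel₀ _ hfnorm.ne'
        · have h1 : ‖f x‖ < ε' := by
            simp only [hKdef, Set.mem_setOf_eq, not_le] at hxK
            exact hxK
          have h2 : 1 / (1 + n * G x) ≤ 1 := by
            rw [div_le_one (hdpos x)]
            have := hGnonneg x
            nlinarith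
          have := norm_nonneg (f x)
          nlinarith
      calc ‖f - h * g‖ ≤ ε' := c0_norm_le (le_of_lt hε') hbound
        _ < ε := hε'lt
    · -- K is empty: ‖f‖ ≤ ε', take 0
      refine ⟨0, by simp [C0Module.suppIdeal], ?_⟩
      rw [dist_eq_norm, sub_zero]
      have hbound : ∀ x, ‖f x‖ ≤ ε' := by
        intro x
        by_contra hcon
        exact hKne ⟨x, le_of_not_gt (fun hlt => hcon (le_of_lt hlt))⟩
      calc ‖f‖ ≤ ε' := c0_norm_le (le_of_lt hε') hbound
        _ < ε := hε'lt

end
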